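/- arXiv:1509.03391 — 3 statements merged into one kernel-verified Lean document; each statement's English description precedes it below -/
import Mathlib

section
/- For an image-finite pLTS, a 1-bounded pseudometric d on S is a state-based bisimulation metric if and only if F(d) ⊑ d, where F(d)(s,t) = sup_{a∈A} H(K(d))(der(s,a), der(t,a)). Consequently, the state-based bisimilarity metric (the least state-based bisimulation metric) equals the least fixed point of the monotone functor F. -/
open scoped BigOperators

/-- A (full) probability distribution over a finite set `S`. -/
def IsDist {S : Type} [Fintype S] (Δ : S → ℝ) : Prop :=
  (∀ s, 0 ≤ Δ s) ∧ ∑ s, Δ s = 1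

/-- A matching (coupling) for a pair of distributions. -/
def IsMatching {S : Type} [Fintype S] (ω : S × S → ℝ) (Δ Θ : S → ℝ) : Prop :=
  IsDist ω ∧ (∀ s, ∑ t, ω (s, t) = Δ s) ∧ (∀ t, ∑ s, ω (s, t) = Θ t)

/-- The Kantorovich lifting of `d` (primal formulation, via matchings). -/
noncomputable def Kan {S : Type} [Fintype S] (d : S → S → ℝ) (Δ Θ : S → ℝ) : ℝ :=
  sInf {r | ∃ ω : S × S → ℝ, IsMatching ω Δ Θ ∧ r = ∑ p : S × S, d p.1 p.2 * ω p}

/-- The Kantorovich lifting of `d` (dual linear-programming formulation). -/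
noncomputable def KanD {S : Type} [Fintype S] (d : S → S → ℝ) (Δ Θ : S → ℝ) : ℝ :=
  sSup {r | ∃ x : S → ℝ, (∀ s, 0 ≤ x s ∧ x s ≤ 1) ∧ (∀ s t, x s - x t ≤ d s t) ∧
    r = ∑ s, (Δ s - Θ s) * x s}

/-- `d` is a pseudometric. -/
def IsPseudometric {X : Type*} (d : X → X → ℝ) : Prop :=
  (∀ x, d x x = 0) ∧ (∀ x y, d x y = d y x) ∧ ∀ x y z, d x z ≤ d x y + d y z

/-- `d` is `1`-bounded (takes values in `[0,1]`). -/
def Bounded1 {X : Type*} (d : X → X → ℝ) : Prop := ∀ x y, 0 ≤ d x y ∧ d x y ≤ 1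

open Classical in
/-- Infimum of a set of reals with the convention `inf ∅ = 1`. -/
noncomputable def inf1 (s : Set ℝ) : ℝ := if s.Nonempty then sInf s else 1

open Classical in
/-- Supremum of a set of reals with the convention `sup ∅ = 0`. -/
noncomputable def sup0 (s : Set ℝ) : ℝ := if s.Nonempty then sSup s else 0

/-- The Hausdorff lifting of a `1`-bounded metric to subsets. -/
noncomputable def hausd {X : Type*} (d : X → X → ℝ) (P Q : Set X) : ℝ :=
  max (sup0 {r | ∃ x ∈ P, r = inf1 {r' | ∃ y ∈ Q, r' = d x y}})
      (sup0 {r | ∃ y ∈ Q, r = inf1 {r' | ∃ x ∈ P, r' = d x y}})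

/-- A probabilistic labelled transition system. -/
structure PLTS (S : Type) (A : Type) where
  trans : S → A → (S → ℝ) → Prop

/-- The set of `a`-successor distributions of state `s`. -/
def der {S A : Type} (T : PLTS S A) (s : S) (a : A) : Set (S → ℝ) := {Δ | T.trans s a Δ}

/-- Image-finiteness of a pLTS. -/
def ImageFinite {S A : Type} (T : PLTS S A) : Prop := ∀ s a, (der T s a).Finite

/-- Every transition target is a (full) distribution. -/
def WellFormed {S A : Type} [Fintype S] (T : PLTS S A) : Prop :=
  ∀ s a Δ, T.trans s a Δ → IsDist Δ

/-- `d` is a state-based bisimulation metric. -/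
def IsSBM {S A : Type} [Fintype S] (T : PLTS S A) (d : S → S → ℝ) : Prop :=
  IsPseudometric d ∧ Bounded1 d ∧
  ∀ s t (ε : ℝ), 0 ≤ ε → ε < 1 → d s t ≤ ε →
    ∀ a Δ, T.trans s a Δ → ∃ Δ', T.trans t a Δ' ∧ Kan d Δ Δ' ≤ ε

/-- The functor `F` on `[0,1]`-valued distance functions. -/
noncomputable def Ffun {S A : Type} [Fintype S] (T : PLTS S A) (d : S → S → ℝ) :
    S → S → ℝ :=
  fun s t => sup0 {r | ∃ a : A, r = hausd (Kan d) (der T s a) (der T t a)}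


open Classical

set_option maxHeartbeats 1000000

section Helpers

namespace SBMAux

lemma sup0_nonneg {s : Set ℝ} (h : ∀ r ∈ s, 0 ≤ r) : 0 ≤ sup0 s := by
  unfold sup0; split
  · exact Real.sSup_nonneg h
  · norm_num

lemma sup0_le {s : Set ℝ} {c : ℝ} (hc : 0 ≤ c) (h : ∀ r ∈ s, r ≤ c) : sup0 s ≤ c := by
  unfold sup0; split
  · exact csSup_le ‹_› h
  · exact hc

lemma le_sup0 {s : Set ℝ} {r c : ℝ} (hr : r ∈ s) (h : ∀ r' ∈ s, r' ≤ c) : r ≤ sup0 s := by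
  unfold sup0
  rw [if_pos ⟨r, hr⟩]
  exact le_csSup ⟨c, h⟩ hr

lemma le_inf1 {s : Set ℝ} {c : ℝ} (hc : c ≤ 1) (h : ∀ r ∈ s, c ≤ r) : c ≤ inf1 s := by
  unfold inf1; split
  · exact le_csInf ‹_› h
  · exact hc

lemma inf1_le {s : Set ℝ} {r : ℝ} (hr : r ∈ s) (h : ∀ r' ∈ s, 0 ≤ r') : inf1 s ≤ r := by
  unfold inf1
  rw [if_pos ⟨r, hr⟩]
  exact csInf_le ⟨0, h⟩ hr

lemma inf1_mem {s : Set ℝ} (hfin : s.Finite) (hne : s.Nonempty) : inf1 s ∈ s := by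
  unfold inf1
  rw [if_pos hne]
  exact hne.csInf_mem hfin

lemma inf1_empty : inf1 (∅ : Set ℝ) = 1 := by simp [inf1]
lemma sup0_empty : sup0 (∅ : Set ℝ) = 0 := by simp [sup0]

variable {S : Type} [Fintype S]

lemma prod_matching {Δ Θ : S → ℝ} (hΔ : IsDist Δ) (hΘ : IsDist Θ) :
    IsMatching (fun p => Δ p.1 * Θ p.2) Δ Θ := by
  refine ⟨⟨fun p => mul_nonneg (hΔ.1 _) (hΘ.1 _), ?_⟩, fun s => ?_, fun t => ?_⟩
  · rw [Fintype.sum_prod_type]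
    simp only [← Finset.mul_sum, hΘ.2, mul_one, hΔ.2]
  · simp only [← Finset.mul_sum, hΘ.2, mul_one]
  · simp only [← Finset.sum_mul, hΔ.2, one_mul]

lemma matching_nonneg {ω : S × S → ℝ} {Δ Θ : S → ℝ} (h : IsMatching ω Δ Θ) (p : S × S) :
    0 ≤ ω p := h.1.1 p

lemma cost_nonneg {d : S → S → ℝ} (hd : ∀ x y, 0 ≤ d x y) {ω : S × S → ℝ} {Δ Θ : S → ℝ}
    (h : IsMatching ω Δ Θ) : 0 ≤ ∑ p : S × S, d p.1 p.2 * ω p :=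
  Finset.sum_nonneg fun p _ => mul_nonneg (hd _ _) (h.1.1 p)

lemma Kan_nonneg {d : S → S → ℝ} (hd : ∀ x y, 0 ≤ d x y) (Δ Θ : S → ℝ) :
    0 ≤ Kan d Δ Θ := by
  apply Real.sInf_nonneg
  rintro r ⟨ω, hω, rfl⟩
  exact cost_nonneg hd hω

lemma Kan_le {d : S → S → ℝ} (hd : ∀ x y, 0 ≤ d x y) {ω : S × S → ℝ} {Δ Θ : S → ℝ}
    (hω : IsMatching ω Δ Θ) : Kan d Δ Θ ≤ ∑ p : S × S, d p.1 p.2 * ω p := by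
  apply csInf_le
  · exact ⟨0, by rintro r ⟨ω', hω', rfl⟩; exact cost_nonneg hd hω'⟩
  · exact ⟨ω, hω, rfl⟩

lemma Kan_le_one {d : S → S → ℝ} (hd0 : ∀ x y, 0 ≤ d x y) (hd1 : ∀ x y, d x y ≤ 1)
    {Δ Θ : S → ℝ} (hΔ : IsDist Δ) (hΘ : IsDist Θ) : Kan d Δ Θ ≤ 1 := by
  have h := prod_matching hΔ hΘ
  refine le_trans (Kan_le hd0 h) ?_
  calc ∑ p : S × S, d p.1 p.2 * (Δ p.1 * Θ p.2)
      ≤ ∑ p : S × S, 1 * (Δ p.1 * Θ p.2) := by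
        apply Finset.sum_le_sum
        intro p _
        exact mul_le_mul_of_nonneg_right (hd1 _ _) (mul_nonneg (hΔ.1 _) (hΘ.1 _))
    _ = 1 := by
        simp only [one_mul]
        exact (prod_matching hΔ hΘ).1.2

lemma Kan_self {d : S → S → ℝ} (hd0 : ∀ x y, 0 ≤ d x y) (hrefl : ∀ x, d x x = 0)
    {Δ : S → ℝ} (hΔ : IsDist Δ) : Kan d Δ Δ ≤ 0 := by
  have hm : IsMatching (fun p : S × S => if p.1 = p.2 then Δ p.1 else 0) Δ Δ := by
    refine ⟨⟨fun p => ?_, ?_⟩, fun s => ?_, fun t => ?_⟩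
    · dsimp only; split
      · exact hΔ.1 _
      · exact le_refl 0
    · rw [Fintype.sum_prod_type]
      simp only [Finset.sum_ite_eq, Finset.mem_univ, if_true]
      exact hΔ.2
    · simp only [Finset.sum_ite_eq, Finset.mem_univ, if_true]
    · simp
  refine le_trans (Kan_le hd0 hm) (le_of_eq ?_)
  apply Finset.sum_eq_zero
  rintro ⟨x, y⟩ _
  dsimp only
  split
  · rename_i h; subst h; rw [hrefl, zero_mul]
  · rw [mul_zero]

lemma Kan_symm {d : S → S → ℝ} (hsym : ∀ x y, d x y = d y x) (Δ Θ : S → ℝ) :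
    Kan d Δ Θ = Kan d Θ Δ := by
  have key : ∀ Δ Θ : S → ℝ,
      {r | ∃ ω : S × S → ℝ, IsMatching ω Δ Θ ∧ r = ∑ p : S × S, d p.1 p.2 * ω p} ⊆
      {r | ∃ ω : S × S → ℝ, IsMatching ω Θ Δ ∧ r = ∑ p : S × S, d p.1 p.2 * ω p} := by
    rintro Δ Θ r ⟨ω, ⟨⟨hpos, hsum⟩, h1, h2⟩, rfl⟩
    refine ⟨fun p => ω (p.2, p.1), ⟨⟨fun p => hpos _, ?_⟩, h2, h1⟩, ?_⟩
    · rw [← hsum]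
      exact Fintype.sum_equiv (Equiv.prodComm S S) _ _ (fun p => rfl)
    · refine Fintype.sum_equiv (Equiv.prodComm S S) _ _ (fun p => ?_)
      simp [Equiv.prodComm, hsym p.1 p.2]
  unfold Kan
  congr 1
  exact Set.Subset.antisymm (key Δ Θ) (key Θ Δ)

lemma Kan_set_nonempty {d : S → S → ℝ} {Δ Θ : S → ℝ} (hΔ : IsDist Δ) (hΘ : IsDist Θ) :
    {r | ∃ ω : S × S → ℝ, IsMatching ω Δ Θ ∧ r = ∑ p : S × S, d p.1 p.2 * ω p}.Nonempty :=
  ⟨_, _, prod_matching hΔ hΘ, rfl⟩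

lemma Kan_mono {d d' : S → S → ℝ} (hd : ∀ x y, 0 ≤ d x y) (h : ∀ x y, d x y ≤ d' x y)
    {Δ Θ : S → ℝ} (hΔ : IsDist Δ) (hΘ : IsDist Θ) : Kan d Δ Θ ≤ Kan d' Δ Θ := by
  apply le_csInf (Kan_set_nonempty hΔ hΘ)
  rintro r ⟨ω, hω, rfl⟩
  refine le_trans (Kan_le hd hω) (Finset.sum_le_sum fun p _ => ?_)
  exact mul_le_mul_of_nonneg_right (h _ _) (hω.1.1 p)

lemma le_of_marginal {ω : S × S → ℝ} {Δ Θ : S → ℝ} (hω : IsMatching ω Δ Θ) (s t : S) :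
    ω (s, t) ≤ Θ t := by
  rw [← hω.2.2 t]
  exact Finset.single_le_sum (fun i _ => hω.1.1 (i, t)) (Finset.mem_univ s)

lemma glue {ω12 ω23 : S × S → ℝ} {Δ Θ Φ : S → ℝ} (hΘ : IsDist Θ)
    (h12 : IsMatching ω12 Δ Θ) (h23 : IsMatching ω23 Θ Φ) :
    IsMatching (fun p : S × S => ∑ t, ω12 (p.1, t) * ω23 (t, p.2) / Θ t) Δ Φ := by
  have hz : ∀ s t, Θ t = 0 → ω12 (s, t) = 0 := fun s t h =>
    le_antisymm (h ▸ le_of_marginal h12 s t) (h12.1.1 _)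
  have hz' : ∀ t u, Θ t = 0 → ω23 (t, u) = 0 := by
    intro t u h
    refine le_antisymm ?_ (h23.1.1 _)
    rw [← h, ← h23.2.1 t]
    exact Finset.single_le_sum (fun i _ => h23.1.1 (t, i)) (Finset.mem_univ u)
  have hnn : ∀ p : S × S, (0:ℝ) ≤ ∑ t, ω12 (p.1, t) * ω23 (t, p.2) / Θ t :=
    fun p => Finset.sum_nonneg fun t _ =>
      div_nonneg (mul_nonneg (h12.1.1 _) (h23.1.1 _)) (hΘ.1 t)
  have hm1 : ∀ s, ∑ u, (∑ t, ω12 (s, t) * ω23 (t, u) / Θ t) = Δ s := by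
    intro s
    rw [Finset.sum_comm]
    rw [← h12.2.1 s]
    refine Finset.sum_congr rfl fun t _ => ?_
    rw [← Finset.sum_div, ← Finset.mul_sum, h23.2.1 t]
    rcases eq_or_ne (Θ t) 0 with h | h
    · rw [hz s t h, zero_mul, zero_div]
    · rw [mul_div_assoc, div_self h, mul_one]
  have hm2 : ∀ u, ∑ s, (∑ t, ω12 (s, t) * ω23 (t, u) / Θ t) = Φ u := by
    intro u
    rw [Finset.sum_comm]
    rw [← h23.2.2 u]
    refine Finset.sum_congr rfl fun t _ => ?_
    rw [← Finset.sum_div]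
    have : ∑ s, ω12 (s, t) * ω23 (t, u) = Θ t * ω23 (t, u) := by
      rw [← Finset.sum_mul, h12.2.2 t]
    rw [this]
    rcases eq_or_ne (Θ t) 0 with h | h
    · rw [hz' t u h, mul_zero, zero_div]
    · rw [mul_comm, mul_div_assoc, div_self h, mul_one]
  refine ⟨⟨hnn, ?_⟩, hm1, hm2⟩
  rw [Fintype.sum_prod_type]
  have : ∑ s, ∑ u, (∑ t, ω12 (s, t) * ω23 (t, u) / Θ t) = ∑ s, Δ s :=
    Finset.sum_congr rfl fun s _ => hm1 s
  rw [this]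
  have : ∀ s, Δ s = ∑ t, ω12 (s, t) := fun s => (h12.2.1 s).symm
  simp only [this]
  rw [← Fintype.sum_prod_type]
  exact h12.1.2

lemma glue_cost {d : S → S → ℝ} (hd : ∀ x y, 0 ≤ d x y)
    (htri : ∀ x y z, d x z ≤ d x y + d y z)
    {ω12 ω23 : S × S → ℝ} {Δ Θ Φ : S → ℝ} (hΘ : IsDist Θ)
    (h12 : IsMatching ω12 Δ Θ) (h23 : IsMatching ω23 Θ Φ) :
    ∑ p : S × S, d p.1 p.2 * (∑ t, ω12 (p.1, t) * ω23 (t, p.2) / Θ t)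
      ≤ (∑ p : S × S, d p.1 p.2 * ω12 p) + ∑ p : S × S, d p.1 p.2 * ω23 p := by
  have key : ∑ p : S × S, d p.1 p.2 * (∑ t, ω12 (p.1, t) * ω23 (t, p.2) / Θ t)
      ≤ ∑ p : S × S, ∑ t, (d p.1 t + d t p.2) * (ω12 (p.1, t) * ω23 (t, p.2) / Θ t) := by
    refine Finset.sum_le_sum fun p _ => ?_
    rw [Finset.mul_sum]
    refine Finset.sum_le_sum fun t _ => ?_
    exact mul_le_mul_of_nonneg_right (htri p.1 t p.2)
      (div_nonneg (mul_nonneg (h12.1.1 _) (h23.1.1 _)) (hΘ.1 t))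
  refine le_trans key ?_
  have split : ∑ p : S × S, ∑ t, (d p.1 t + d t p.2) * (ω12 (p.1, t) * ω23 (t, p.2) / Θ t)
      = (∑ p : S × S, ∑ t, d p.1 t * (ω12 (p.1, t) * ω23 (t, p.2) / Θ t))
        + ∑ p : S × S, ∑ t, d t p.2 * (ω12 (p.1, t) * ω23 (t, p.2) / Θ t) := by
    rw [← Finset.sum_add_distrib]
    refine Finset.sum_congr rfl fun p _ => ?_
    rw [← Finset.sum_add_distrib]
    exact Finset.sum_congr rfl fun t _ => (add_mul _ _ _)
  rw [split]
  have hz : ∀ s t, Θ t = 0 → ω12 (s, t) = 0 := fun s t h =>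
    le_antisymm (h ▸ le_of_marginal h12 s t) (h12.1.1 _)
  have hz' : ∀ t u, Θ t = 0 → ω23 (t, u) = 0 := by
    intro t u h
    refine le_antisymm ?_ (h23.1.1 _)
    rw [← h, ← h23.2.1 t]
    exact Finset.single_le_sum (fun i _ => h23.1.1 (t, i)) (Finset.mem_univ u)
  have h1 : ∑ p : S × S, ∑ t, d p.1 t * (ω12 (p.1, t) * ω23 (t, p.2) / Θ t)
      ≤ ∑ p : S × S, d p.1 p.2 * ω12 p := by
    rw [Fintype.sum_prod_type]
    calc ∑ s, ∑ u, ∑ t, d s t * (ω12 (s, t) * ω23 (t, u) / Θ t)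
        = ∑ s, ∑ t, d s t * ω12 (s, t) * (Θ t / Θ t) := by
          refine Finset.sum_congr rfl fun s _ => ?_
          rw [Finset.sum_comm]
          refine Finset.sum_congr rfl fun t _ => ?_
          have e1 : ∀ u, d s t * (ω12 (s, t) * ω23 (t, u) / Θ t)
              = d s t * ω12 (s, t) * ω23 (t, u) / Θ t := fun u => by ring
          simp only [e1]
          rw [← Finset.sum_div, ← Finset.mul_sum, h23.2.1 t, mul_div_assoc]
      _ ≤ ∑ s, ∑ t, d s t * ω12 (s, t) := by
          refine Finset.sum_le_sum fun s _ => Finset.sum_le_sum fun t _ => ?_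
          rcases eq_or_ne (Θ t) 0 with h | h
          · rw [h, div_zero, mul_zero]
            exact mul_nonneg (hd s t) (h12.1.1 _)
          · rw [div_self h, mul_one]
      _ = ∑ p : S × S, d p.1 p.2 * ω12 p := by rw [Fintype.sum_prod_type]
  have h2 : ∑ p : S × S, ∑ t, d t p.2 * (ω12 (p.1, t) * ω23 (t, p.2) / Θ t)
      ≤ ∑ p : S × S, d p.1 p.2 * ω23 p := by
    rw [Fintype.sum_prod_type]
    rw [Finset.sum_comm]
    calc ∑ u, ∑ s, ∑ t, d t u * (ω12 (s, t) * ω23 (t, u) / Θ t)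
        = ∑ u, ∑ t, d t u * ω23 (t, u) * (Θ t / Θ t) := by
          refine Finset.sum_congr rfl fun u _ => ?_
          rw [Finset.sum_comm]
          refine Finset.sum_congr rfl fun t _ => ?_
          have e1 : ∀ s, d t u * (ω12 (s, t) * ω23 (t, u) / Θ t)
              = d t u * ω23 (t, u) / Θ t * ω12 (s, t) := fun s => by ring
          simp only [e1]
          rw [← Finset.mul_sum, h12.2.2 t]
          ring
      _ ≤ ∑ u, ∑ t, d t u * ω23 (t, u) := by
          refine Finset.sum_le_sum fun u _ => Finset.sum_le_sum fun t _ => ?_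
          rcases eq_or_ne (Θ t) 0 with h | h
          · rw [h, div_zero, mul_zero]
            exact mul_nonneg (hd t u) (h23.1.1 _)
          · rw [div_self h, mul_one]
      _ = ∑ p : S × S, d p.1 p.2 * ω23 p := by
          rw [Finset.sum_comm, Fintype.sum_prod_type]
  exact add_le_add h1 h2

lemma Kan_triangle {d : S → S → ℝ} (hd : ∀ x y, 0 ≤ d x y)
    (htri : ∀ x y z, d x z ≤ d x y + d y z)
    {Δ Θ Φ : S → ℝ} (hΔ : IsDist Δ) (hΘ : IsDist Θ) (hΦ : IsDist Φ) :
    Kan d Δ Φ ≤ Kan d Δ Θ + Kan d Θ Φ := by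
  have key : ∀ r12 ∈ {r | ∃ ω : S × S → ℝ, IsMatching ω Δ Θ ∧
        r = ∑ p : S × S, d p.1 p.2 * ω p},
      ∀ r23 ∈ {r | ∃ ω : S × S → ℝ, IsMatching ω Θ Φ ∧
        r = ∑ p : S × S, d p.1 p.2 * ω p}, Kan d Δ Φ ≤ r12 + r23 := by
    rintro r12 ⟨ω12, h12, rfl⟩ r23 ⟨ω23, h23, rfl⟩
    exact le_trans (Kan_le hd (glue hΘ h12 h23)) (glue_cost hd htri hΘ h12 h23)
  have step : ∀ r12 ∈ {r | ∃ ω : S × S → ℝ, IsMatching ω Δ Θ ∧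
        r = ∑ p : S × S, d p.1 p.2 * ω p}, Kan d Δ Φ - r12 ≤ Kan d Θ Φ := by
    intro r12 h12
    refine le_csInf (Kan_set_nonempty hΘ hΦ) fun r23 h23 => ?_
    have := key r12 h12 r23 h23
    linarith
  have : Kan d Δ Φ - Kan d Θ Φ ≤ Kan d Δ Θ := by
    refine le_csInf (Kan_set_nonempty hΔ hΘ) fun r12 h12 => ?_
    have := step r12 h12
    linarith
  linarith

variable {X : Type*} {d d' : X → X → ℝ} {P Q R : Set X}

lemma inf1_le_one {s : Set ℝ} (h : ∀ r ∈ s, 0 ≤ r ∧ r ≤ 1) : inf1 s ≤ 1 := by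
  rcases s.eq_empty_or_nonempty with rfl | ⟨r, hr⟩
  · rw [inf1_empty]
  · exact le_trans (inf1_le hr fun r' h' => (h r' h').1) (h r hr).2

lemma inf1_nonneg {s : Set ℝ} (h : ∀ r ∈ s, 0 ≤ r) : 0 ≤ inf1 s :=
  le_inf1 zero_le_one h

lemma hausd_nonneg (h : ∀ x ∈ P, ∀ y ∈ Q, 0 ≤ d x y) : 0 ≤ hausd d P Q := by
  refine le_trans ?_ (le_max_left _ _)
  refine sup0_nonneg ?_
  rintro r ⟨x, hx, rfl⟩
  exact inf1_nonneg (by rintro r' ⟨y, hy, rfl⟩; exact h x hx y hy)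

lemma hausd_le_one (h : ∀ x ∈ P, ∀ y ∈ Q, 0 ≤ d x y ∧ d x y ≤ 1) : hausd d P Q ≤ 1 := by
  refine max_le (sup0_le zero_le_one ?_) (sup0_le zero_le_one ?_)
  · rintro r ⟨x, hx, rfl⟩
    exact inf1_le_one (by rintro r' ⟨y, hy, rfl⟩; exact h x hx y hy)
  · rintro r ⟨y, hy, rfl⟩
    exact inf1_le_one (by rintro r' ⟨x, hx, rfl⟩; exact h x hx y hy)

lemma hausd_le {c : ℝ} (hc : 0 ≤ c) (h0 : ∀ x ∈ P, ∀ y ∈ Q, 0 ≤ d x y)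
    (h1 : ∀ x ∈ P, ∃ y ∈ Q, d x y ≤ c) (h2 : ∀ y ∈ Q, ∃ x ∈ P, d x y ≤ c) :
    hausd d P Q ≤ c := by
  refine max_le (sup0_le hc ?_) (sup0_le hc ?_)
  · rintro r ⟨x, hx, rfl⟩
    obtain ⟨y, hy, hxy⟩ := h1 x hx
    exact le_trans (inf1_le ⟨y, hy, rfl⟩
      (by rintro r' ⟨y', hy', rfl⟩; exact h0 x hx y' hy')) hxy
  · rintro r ⟨y, hy, rfl⟩
    obtain ⟨x, hx, hxy⟩ := h2 y hy
    exact le_trans (inf1_le ⟨x, hx, rfl⟩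
      (by rintro r' ⟨x', hx', rfl⟩; exact h0 x' hx' y hy)) hxy

lemma set_eq_image (x : X) (Q : Set X) : {r' | ∃ y ∈ Q, r' = d x y} = (fun y => d x y) '' Q := by
  ext r'; simp [Set.mem_image, eq_comm]

lemma set_eq_image' (y : X) (P : Set X) : {r' | ∃ x ∈ P, r' = d x y} = (fun x => d x y) '' P := by
  ext r'; simp [Set.mem_image, eq_comm]

lemma exists_close_left {c : ℝ} (hQ : Q.Finite)
    (h01 : ∀ x ∈ P, ∀ y ∈ Q, 0 ≤ d x y ∧ d x y ≤ 1)
    (hh : hausd d P Q ≤ c) (hc : c < 1) {x : X} (hx : x ∈ P) :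
    ∃ y ∈ Q, d x y ≤ c := by
  have hb : ∀ r ∈ {r | ∃ x ∈ P, r = inf1 {r' | ∃ y ∈ Q, r' = d x y}}, r ≤ 1 := by
    rintro r ⟨x', hx', rfl⟩
    exact inf1_le_one (by rintro r' ⟨y, hy, rfl⟩; exact h01 x' hx' y hy)
  have hmem : inf1 {r' | ∃ y ∈ Q, r' = d x y}
      ∈ {r | ∃ x ∈ P, r = inf1 {r' | ∃ y ∈ Q, r' = d x y}} := ⟨x, hx, rfl⟩
  have h1 : inf1 {r' | ∃ y ∈ Q, r' = d x y} ≤ c :=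
    le_trans (le_trans (le_sup0 hmem hb) (le_max_left _ _)) hh
  have hne : {r' | ∃ y ∈ Q, r' = d x y}.Nonempty := by
    by_contra hemp
    rw [Set.not_nonempty_iff_eq_empty] at hemp
    rw [hemp, inf1_empty] at h1
    linarith
  have hfin : {r' | ∃ y ∈ Q, r' = d x y}.Finite := by
    rw [set_eq_image]; exact hQ.image _
  obtain ⟨y, hy, heq⟩ := inf1_mem hfin hne
  exact ⟨y, hy, heq ▸ h1⟩

lemma exists_close_right {c : ℝ} (hP : P.Finite)
    (h01 : ∀ x ∈ P, ∀ y ∈ Q, 0 ≤ d x y ∧ d x y ≤ 1)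
    (hh : hausd d P Q ≤ c) (hc : c < 1) {y : X} (hy : y ∈ Q) :
    ∃ x ∈ P, d x y ≤ c := by
  have hb : ∀ r ∈ {r | ∃ y ∈ Q, r = inf1 {r' | ∃ x ∈ P, r' = d x y}}, r ≤ 1 := by
    rintro r ⟨y', hy', rfl⟩
    exact inf1_le_one (by rintro r' ⟨x, hx, rfl⟩; exact h01 x hx y' hy')
  have hmem : inf1 {r' | ∃ x ∈ P, r' = d x y}
      ∈ {r | ∃ y ∈ Q, r = inf1 {r' | ∃ x ∈ P, r' = d x y}} := ⟨y, hy, rfl⟩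
  have h1 : inf1 {r' | ∃ x ∈ P, r' = d x y} ≤ c :=
    le_trans (le_trans (le_sup0 hmem hb) (le_max_right _ _)) hh
  have hne : {r' | ∃ x ∈ P, r' = d x y}.Nonempty := by
    by_contra hemp
    rw [Set.not_nonempty_iff_eq_empty] at hemp
    rw [hemp, inf1_empty] at h1
    linarith
  have hfin : {r' | ∃ x ∈ P, r' = d x y}.Finite := by
    rw [set_eq_image']; exact hP.image _
  obtain ⟨x, hx, heq⟩ := inf1_mem hfin hne
  exact ⟨x, hx, heq ▸ h1⟩

lemma hausd_comm (hsym : ∀ x y, d x y = d y x) : hausd d P Q = hausd d Q P := by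
  unfold hausd
  rw [max_comm]
  congr 2
  · ext r
    constructor
    · rintro ⟨y, hy, rfl⟩
      refine ⟨y, hy, ?_⟩
      congr 1
      ext r'
      exact ⟨fun ⟨x, hx, h⟩ => ⟨x, hx, h.trans (hsym x y)⟩,
             fun ⟨x, hx, h⟩ => ⟨x, hx, h.trans (hsym y x)⟩⟩
    · rintro ⟨y, hy, rfl⟩
      refine ⟨y, hy, ?_⟩
      congr 1
      ext r'
      exact ⟨fun ⟨x, hx, h⟩ => ⟨x, hx, h.trans (hsym y x)⟩,
             fun ⟨x, hx, h⟩ => ⟨x, hx, h.trans (hsym x y)⟩⟩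
  · ext r
    constructor
    · rintro ⟨x, hx, rfl⟩
      refine ⟨x, hx, ?_⟩
      congr 1
      ext r'
      exact ⟨fun ⟨y, hy, h⟩ => ⟨y, hy, h.trans (hsym x y)⟩,
             fun ⟨y, hy, h⟩ => ⟨y, hy, h.trans (hsym y x)⟩⟩
    · rintro ⟨x, hx, rfl⟩
      refine ⟨x, hx, ?_⟩
      congr 1
      ext r'
      exact ⟨fun ⟨y, hy, h⟩ => ⟨y, hy, h.trans (hsym y x)⟩,
             fun ⟨y, hy, h⟩ => ⟨y, hy, h.trans (hsym x y)⟩⟩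

lemma hausd_mono (h01 : ∀ x ∈ P, ∀ y ∈ Q, 0 ≤ d x y ∧ d x y ≤ 1)
    (h01' : ∀ x ∈ P, ∀ y ∈ Q, 0 ≤ d' x y ∧ d' x y ≤ 1)
    (hmono : ∀ x ∈ P, ∀ y ∈ Q, d x y ≤ d' x y) :
    hausd d P Q ≤ hausd d' P Q := by
  have hb' : ∀ r ∈ {r | ∃ x ∈ P, r = inf1 {r' | ∃ y ∈ Q, r' = d' x y}}, r ≤ 1 := by
    rintro r ⟨x', hx', rfl⟩
    exact inf1_le_one (by rintro r' ⟨y, hy, rfl⟩; exact h01' x' hx' y hy)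
  have hb'' : ∀ r ∈ {r | ∃ y ∈ Q, r = inf1 {r' | ∃ x ∈ P, r' = d' x y}}, r ≤ 1 := by
    rintro r ⟨y', hy', rfl⟩
    exact inf1_le_one (by rintro r' ⟨x, hx, rfl⟩; exact h01' x hx y' hy')
  refine max_le ?_ ?_
  · refine le_trans (sup0_le (hausd_nonneg fun x hx y hy => (h01' x hx y hy).1) ?_)
      (le_refl _)
    rintro r ⟨x, hx, rfl⟩
    have step1 : inf1 {r' | ∃ y ∈ Q, r' = d x y} ≤ inf1 {r' | ∃ y ∈ Q, r' = d' x y} := by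
      refine le_inf1 (inf1_le_one (by rintro r' ⟨y, hy, rfl⟩; exact h01 x hx y hy)) ?_
      rintro r' ⟨y, hy, rfl⟩
      exact le_trans (inf1_le ⟨y, hy, rfl⟩
        (by rintro r'' ⟨y', hy', rfl⟩; exact (h01 x hx y' hy').1)) (hmono x hx y hy)
    have hmem : inf1 {r' | ∃ y ∈ Q, r' = d' x y}
        ∈ {r | ∃ x ∈ P, r = inf1 {r' | ∃ y ∈ Q, r' = d' x y}} := ⟨x, hx, rfl⟩
    exact le_trans step1 (le_trans (le_sup0 hmem hb') (le_max_left _ _))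
  · refine le_trans (sup0_le (hausd_nonneg fun x hx y hy => (h01' x hx y hy).1) ?_)
      (le_refl _)
    rintro r ⟨y, hy, rfl⟩
    have step1 : inf1 {r' | ∃ x ∈ P, r' = d x y} ≤ inf1 {r' | ∃ x ∈ P, r' = d' x y} := by
      refine le_inf1 (inf1_le_one (by rintro r' ⟨x, hx, rfl⟩; exact h01 x hx y hy)) ?_
      rintro r' ⟨x, hx, rfl⟩
      exact le_trans (inf1_le ⟨x, hx, rfl⟩
        (by rintro r'' ⟨x', hx', rfl⟩; exact (h01 x' hx' y hy).1)) (hmono x hx y hy)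
    have hmem : inf1 {r' | ∃ x ∈ P, r' = d' x y}
        ∈ {r | ∃ y ∈ Q, r = inf1 {r' | ∃ x ∈ P, r' = d' x y}} := ⟨y, hy, rfl⟩
    exact le_trans step1 (le_trans (le_sup0 hmem hb'') (le_max_right _ _))

lemma hausd_empty_left (hQ : Q.Nonempty) : hausd d (∅ : Set X) Q = 1 := by
  unfold hausd
  have e1 : {r | ∃ x ∈ (∅ : Set X), r = inf1 {r' | ∃ y ∈ Q, r' = d x y}} = ∅ := by
    ext r; simp
  have e2 : {r | ∃ y ∈ Q, r = inf1 {r' | ∃ x ∈ (∅ : Set X), r' = d x y}} = {1} := by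
    ext r
    simp only [Set.mem_setOf_eq, Set.mem_singleton_iff]
    constructor
    · rintro ⟨y, hy, rfl⟩
      have : {r' | ∃ x ∈ (∅ : Set X), r' = d x y} = ∅ := by ext; simp
      rw [this, inf1_empty]
    · rintro rfl
      obtain ⟨y, hy⟩ := hQ
      refine ⟨y, hy, ?_⟩
      have : {r' | ∃ x ∈ (∅ : Set X), r' = d x y} = ∅ := by ext; simp
      rw [this, inf1_empty]
  rw [e1, e2, sup0_empty]
  have : sup0 {(1:ℝ)} = 1 := by
    refine le_antisymm (sup0_le zero_le_one ?_)
      (le_sup0 (s := {(1:ℝ)}) (c := 1) rfl ?_) <;>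
      · rintro r' hr'
        rw [Set.mem_singleton_iff] at hr'
        exact le_of_eq hr'
  rw [this]
  norm_num

lemma hausd_empty_right (hP : P.Nonempty) : hausd d P (∅ : Set X) = 1 := by
  unfold hausd
  have e1 : {r | ∃ x ∈ P, r = inf1 {r' | ∃ y ∈ (∅ : Set X), r' = d x y}} = {1} := by
    ext r
    simp only [Set.mem_setOf_eq, Set.mem_singleton_iff]
    constructor
    · rintro ⟨x, hx, rfl⟩
      have : {r' | ∃ y ∈ (∅ : Set X), r' = d x y} = ∅ := by ext; simp
      rw [this, inf1_empty]
    · rintro rfl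
      obtain ⟨x, hx⟩ := hP
      refine ⟨x, hx, ?_⟩
      have : {r' | ∃ y ∈ (∅ : Set X), r' = d x y} = ∅ := by ext; simp
      rw [this, inf1_empty]
  have e2 : {r | ∃ y ∈ (∅ : Set X), r = inf1 {r' | ∃ x ∈ P, r' = d x y}} = ∅ := by
    ext r; simp
  rw [e1, e2, sup0_empty]
  have : sup0 {(1:ℝ)} = 1 := by
    refine le_antisymm (sup0_le zero_le_one ?_)
      (le_sup0 (s := {(1:ℝ)}) (c := 1) rfl ?_) <;>
      · rintro r' hr'
        rw [Set.mem_singleton_iff] at hr'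
        exact le_of_eq hr'
  rw [this]
  norm_num

lemma hausd_empty_empty : hausd d (∅ : Set X) (∅ : Set X) = 0 := by
  unfold hausd
  have e1 : {r | ∃ x ∈ (∅ : Set X), r = inf1 {r' | ∃ y ∈ (∅ : Set X), r' = d x y}} = ∅ := by
    ext r; simp
  have e2 : {r | ∃ y ∈ (∅ : Set X), r = inf1 {r' | ∃ x ∈ (∅ : Set X), r' = d x y}} = ∅ := by
    ext r; simp
  rw [e1, e2, sup0_empty]
  norm_num

lemma attain_left (hQf : Q.Finite) (hQ : Q.Nonempty)
    (h01 : ∀ x ∈ P, ∀ y ∈ Q, 0 ≤ d x y ∧ d x y ≤ 1) {x : X} (hx : x ∈ P) :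
    ∃ y ∈ Q, d x y ≤ hausd d P Q := by
  have hb : ∀ r ∈ {r | ∃ x ∈ P, r = inf1 {r' | ∃ y ∈ Q, r' = d x y}}, r ≤ 1 := by
    rintro r ⟨x', hx', rfl⟩
    exact inf1_le_one (by rintro r' ⟨y, hy, rfl⟩; exact h01 x' hx' y hy)
  have hmem : inf1 {r' | ∃ y ∈ Q, r' = d x y}
      ∈ {r | ∃ x ∈ P, r = inf1 {r' | ∃ y ∈ Q, r' = d x y}} := ⟨x, hx, rfl⟩
  have h1 : inf1 {r' | ∃ y ∈ Q, r' = d x y} ≤ hausd d P Q :=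
    le_trans (le_sup0 hmem hb) (le_max_left _ _)
  have hne : {r' | ∃ y ∈ Q, r' = d x y}.Nonempty := by
    obtain ⟨y, hy⟩ := hQ; exact ⟨d x y, y, hy, rfl⟩
  have hfin : {r' | ∃ y ∈ Q, r' = d x y}.Finite := by
    rw [set_eq_image]; exact hQf.image _
  obtain ⟨y, hy, heq⟩ := inf1_mem hfin hne
  exact ⟨y, hy, heq ▸ h1⟩

lemma attain_right (hPf : P.Finite) (hP : P.Nonempty)
    (h01 : ∀ x ∈ P, ∀ y ∈ Q, 0 ≤ d x y ∧ d x y ≤ 1) {y : X} (hy : y ∈ Q) :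
    ∃ x ∈ P, d x y ≤ hausd d P Q := by
  have hb : ∀ r ∈ {r | ∃ y ∈ Q, r = inf1 {r' | ∃ x ∈ P, r' = d x y}}, r ≤ 1 := by
    rintro r ⟨y', hy', rfl⟩
    exact inf1_le_one (by rintro r' ⟨x, hx, rfl⟩; exact h01 x hx y' hy')
  have hmem : inf1 {r' | ∃ x ∈ P, r' = d x y}
      ∈ {r | ∃ y ∈ Q, r = inf1 {r' | ∃ x ∈ P, r' = d x y}} := ⟨y, hy, rfl⟩
  have h1 : inf1 {r' | ∃ x ∈ P, r' = d x y} ≤ hausd d P Q :=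
    le_trans (le_sup0 hmem hb) (le_max_right _ _)
  have hne : {r' | ∃ x ∈ P, r' = d x y}.Nonempty := by
    obtain ⟨x, hx⟩ := hP; exact ⟨d x y, x, hx, rfl⟩
  have hfin : {r' | ∃ x ∈ P, r' = d x y}.Finite := by
    rw [set_eq_image']; exact hPf.image _
  obtain ⟨x, hx, heq⟩ := inf1_mem hfin hne
  exact ⟨x, hx, heq ▸ h1⟩

lemma hausd_triangle (hQf : Q.Finite) (hRf : R.Finite)
    (hPQ : ∀ x ∈ P, ∀ y ∈ Q, 0 ≤ d x y ∧ d x y ≤ 1)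
    (hPR : ∀ x ∈ P, ∀ z ∈ R, 0 ≤ d x z ∧ d x z ≤ 1)
    (hRQ : ∀ z ∈ R, ∀ y ∈ Q, 0 ≤ d z y ∧ d z y ≤ 1)
    (hPf : P.Finite)
    (htri : ∀ x ∈ P, ∀ z ∈ R, ∀ y ∈ Q, d x y ≤ d x z + d z y) :
    hausd d P Q ≤ hausd d P R + hausd d R Q := by
  have hPR0 : 0 ≤ hausd d P R := hausd_nonneg fun x hx z hz => (hPR x hx z hz).1
  have hRQ0 : 0 ≤ hausd d R Q := hausd_nonneg fun z hz y hy => (hRQ z hz y hy).1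
  rcases P.eq_empty_or_nonempty with rfl | hP
  · rcases Q.eq_empty_or_nonempty with rfl | hQ
    · rw [hausd_empty_empty]; linarith
    · rw [hausd_empty_left hQ]
      rcases R.eq_empty_or_nonempty with rfl | hR
      · rw [hausd_empty_left hQ]; linarith
      · rw [hausd_empty_left hR]; linarith
  · rcases Q.eq_empty_or_nonempty with rfl | hQ
    · rw [hausd_empty_right hP]
      rcases R.eq_empty_or_nonempty with rfl | hR
      · rw [hausd_empty_right hP]; linarith
      · rw [hausd_empty_right hR]; linarith
    · rcases R.eq_empty_or_nonempty with rfl | hR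
      · rw [hausd_empty_right hP, hausd_empty_left hQ]
        have := hausd_le_one hPQ
        linarith
      · refine hausd_le (by linarith) (fun x hx y hy => (hPQ x hx y hy).1) ?_ ?_
        · intro x hx
          obtain ⟨z, hz, hxz⟩ := attain_left hRf hR hPR hx
          obtain ⟨y, hy, hzy⟩ := attain_left hQf hQ hRQ hz
          exact ⟨y, hy, le_trans (htri x hx z hz y hy) (by linarith)⟩
        · intro y hy
          obtain ⟨z, hz, hzy⟩ := attain_right hRf hR hRQ hy
          obtain ⟨x, hx, hxz⟩ := attain_right hPf hP hPR hz
          exact ⟨x, hx, le_trans (htri x hx z hz y hy) (by linarith)⟩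

section FfunLemmas

variable {S A : Type} [Fintype S] {T : PLTS S A}

lemma pair_bounds {dd : S → S → ℝ} (hd : Bounded1 dd) (hwf : WellFormed T) {s t : S} {a : A} :
    ∀ Δ ∈ der T s a, ∀ Δ' ∈ der T t a, 0 ≤ Kan dd Δ Δ' ∧ Kan dd Δ Δ' ≤ 1 :=
  fun Δ hΔ Δ' hΔ' => ⟨Kan_nonneg (fun x y => (hd x y).1) _ _,
    Kan_le_one (fun x y => (hd x y).1) (fun x y => (hd x y).2) (hwf _ _ _ hΔ) (hwf _ _ _ hΔ')⟩

lemma Ffun_le {dd : S → S → ℝ} {s t : S} {c : ℝ} (hc : 0 ≤ c)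
    (h : ∀ a : A, hausd (Kan dd) (der T s a) (der T t a) ≤ c) : Ffun T dd s t ≤ c :=
  sup0_le hc (by rintro r ⟨a, rfl⟩; exact h a)

lemma hausd_le_Ffun {dd : S → S → ℝ} (hd : Bounded1 dd) (hwf : WellFormed T)
    {s t : S} (a : A) : hausd (Kan dd) (der T s a) (der T t a) ≤ Ffun T dd s t := by
  have hmem : hausd (Kan dd) (der T s a) (der T t a)
      ∈ {r | ∃ a : A, r = hausd (Kan dd) (der T s a) (der T t a)} := ⟨a, rfl⟩
  unfold Ffun
  refine le_sup0 (c := 1) hmem ?_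
  rintro r ⟨a', rfl⟩
  exact hausd_le_one (pair_bounds hd hwf)

lemma Ffun_nonneg {dd : S → S → ℝ} (hd : Bounded1 dd) (s t : S) : 0 ≤ Ffun T dd s t := by
  refine sup0_nonneg ?_
  rintro r ⟨a, rfl⟩
  exact hausd_nonneg fun Δ _ Δ' _ => Kan_nonneg (fun x y => (hd x y).1) _ _

lemma Ffun_le_one {dd : S → S → ℝ} (hd : Bounded1 dd) (hwf : WellFormed T) (s t : S) :
    Ffun T dd s t ≤ 1 :=
  Ffun_le zero_le_one fun a => hausd_le_one (pair_bounds hd hwf)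

lemma Ffun_mono {dd dd' : S → S → ℝ} (hd : Bounded1 dd) (hd' : Bounded1 dd')
    (hwf : WellFormed T) (hmono : ∀ x y, dd x y ≤ dd' x y) (s t : S) :
    Ffun T dd s t ≤ Ffun T dd' s t := by
  refine Ffun_le (Ffun_nonneg hd' s t) fun a => ?_
  refine le_trans (hausd_mono (pair_bounds hd hwf) (pair_bounds hd' hwf) ?_)
    (hausd_le_Ffun hd' hwf a)
  intro Δ hΔ Δ' hΔ'
  exact Kan_mono (fun x y => (hd x y).1) hmono (hwf _ _ _ hΔ) (hwf _ _ _ hΔ')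

lemma Ffun_refl {dd : S → S → ℝ} (hd0 : ∀ x y, 0 ≤ dd x y) (hdiag : ∀ x, dd x x = 0)
    (hwf : WellFormed T) (s : S) : Ffun T dd s s ≤ 0 := by
  refine Ffun_le (le_refl 0) fun a => ?_
  refine hausd_le (le_refl 0) (fun Δ _ Δ' _ => Kan_nonneg hd0 _ _) ?_ ?_
  · exact fun Δ hΔ => ⟨Δ, hΔ, Kan_self hd0 hdiag (hwf _ _ _ hΔ)⟩
  · exact fun Δ hΔ => ⟨Δ, hΔ, Kan_self hd0 hdiag (hwf _ _ _ hΔ)⟩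

lemma Ffun_symm {dd : S → S → ℝ} (hsym : ∀ x y, dd x y = dd y x) (s t : S) :
    Ffun T dd s t = Ffun T dd t s := by
  unfold Ffun
  congr 1
  ext r
  constructor
  · rintro ⟨a, rfl⟩
    exact ⟨a, (hausd_comm (Kan_symm hsym)).symm⟩
  · rintro ⟨a, rfl⟩
    exact ⟨a, (hausd_comm (Kan_symm hsym)).symm⟩

lemma Ffun_triangle {dd : S → S → ℝ} (hd : Bounded1 dd)
    (htri : ∀ x y z, dd x z ≤ dd x y + dd y z)
    (hwf : WellFormed T) (hfin : ImageFinite T) (s t u : S) :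
    Ffun T dd s u ≤ Ffun T dd s t + Ffun T dd t u := by
  refine Ffun_le (add_nonneg (Ffun_nonneg hd s t) (Ffun_nonneg hd t u)) fun a => ?_
  refine le_trans (hausd_triangle (R := der T t a) (hfin u a) (hfin t a)
    (pair_bounds hd hwf) (pair_bounds hd hwf) (pair_bounds hd hwf) (hfin s a) ?_) ?_
  · intro Δ hΔ Θ hΘ Φ hΦ
    exact Kan_triangle (fun x y => (hd x y).1) htri
      (hwf _ _ _ hΔ) (hwf _ _ _ hΘ) (hwf _ _ _ hΦ)
  · exact add_le_add (hausd_le_Ffun hd hwf a) (hausd_le_Ffun hd hwf a)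

lemma part1 (hwf : WellFormed T) (hfin : ImageFinite T) (d : S → S → ℝ)
    (hpm : IsPseudometric d) (hb : Bounded1 d) :
    IsSBM T d ↔ ∀ s t, Ffun T d s t ≤ d s t := by
  constructor
  · intro h s t
    rcases lt_or_eq_of_le (hb s t).2 with hlt | heq
    · refine Ffun_le (hb s t).1 fun a => ?_
      refine hausd_le (hb s t).1
        (fun Δ _ Δ' _ => Kan_nonneg (fun x y => (hb x y).1) _ _) ?_ ?_
      · intro Δ hΔ
        exact h.2.2 s t (d s t) (hb s t).1 hlt (le_refl _) a Δ hΔ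
      · intro Δ' hΔ'
        obtain ⟨Δ, hΔ, hk⟩ := h.2.2 t s (d s t) (hb s t).1 hlt
          (le_of_eq (hpm.2.1 t s)) a Δ' hΔ'
        exact ⟨Δ, hΔ, (Kan_symm hpm.2.1 Δ Δ').trans_le hk⟩
    · rw [heq]
      exact Ffun_le_one hb hwf s t
  · intro h
    refine ⟨hpm, hb, fun s t ε hε0 hε1 hdst a Δ hΔ => ?_⟩
    have hH : hausd (Kan d) (der T s a) (der T t a) ≤ ε :=
      le_trans (hausd_le_Ffun hb hwf a) (le_trans (h s t) hdst)
    obtain ⟨Δ', hΔ', hk⟩ := exists_close_left (hfin t a) (pair_bounds hb hwf) hH hε1 hΔ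
    exact ⟨Δ', hΔ', hk⟩

end FfunLemmas

section Mfun

variable {S A : Type} [Fintype S] {T : PLTS S A}

def Pre (T : PLTS S A) (e : S → S → ℝ) : Prop :=
  Bounded1 e ∧ ∀ s t, Ffun T e s t ≤ e s t

noncomputable def mfun (T : PLTS S A) : S → S → ℝ :=
  fun s t => sInf {r | ∃ e, Pre T e ∧ r = e s t}

lemma mset_nonneg (s t : S) : ∀ r ∈ {r | ∃ e, Pre T e ∧ r = e s t}, 0 ≤ r := by
  rintro r ⟨e, he, rfl⟩
  exact (he.1 s t).1

lemma one_pre (hwf : WellFormed T) : Pre T (fun _ _ => (1:ℝ)) := by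
  have hb : Bounded1 (fun _ _ : S => (1:ℝ)) := fun _ _ => ⟨zero_le_one, le_refl 1⟩
  exact ⟨hb, fun s t => Ffun_le_one hb hwf s t⟩

lemma mset_ne (hwf : WellFormed T) (s t : S) :
    {r | ∃ e, Pre T e ∧ r = e s t}.Nonempty :=
  ⟨1, fun _ _ => 1, one_pre hwf, rfl⟩

lemma mfun_le {e : S → S → ℝ} (he : Pre T e) (s t : S) : mfun T s t ≤ e s t :=
  csInf_le ⟨0, mset_nonneg s t⟩ ⟨e, he, rfl⟩

lemma mfun_bounded (hwf : WellFormed T) : Bounded1 (mfun T) := fun s t =>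
  ⟨Real.sInf_nonneg (mset_nonneg s t), mfun_le (one_pre hwf) s t⟩

lemma mfun_pre (hwf : WellFormed T) : Pre T (mfun T) := by
  refine ⟨mfun_bounded hwf, fun s t => ?_⟩
  refine le_csInf (mset_ne hwf s t) ?_
  rintro r ⟨e, he, rfl⟩
  exact le_trans (Ffun_mono (mfun_bounded hwf) he.1 hwf
    (fun x y => mfun_le he x y) s t) (he.2 s t)

lemma mfun_fix (hwf : WellFormed T) (s t : S) :
    Ffun T (mfun T) s t = mfun T s t := by
  refine le_antisymm ((mfun_pre hwf).2 s t) ?_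
  have hFb : Bounded1 (Ffun T (mfun T)) := fun x y =>
    ⟨Ffun_nonneg (mfun_bounded hwf) x y, Ffun_le_one (mfun_bounded hwf) hwf x y⟩
  refine mfun_le ⟨hFb, fun x y => ?_⟩ s t
  exact Ffun_mono hFb (mfun_bounded hwf) hwf (fun u v => (mfun_pre hwf).2 u v) x y

lemma mfun_refl (hwf : WellFormed T) (s : S) : mfun T s s = 0 := by
  set e : S → S → ℝ := fun x y => if x = y then 0 else mfun T x y with he
  have he0 : ∀ x y, 0 ≤ e x y := by
    intro x y
    rw [he]; dsimp only
    split
    · exact le_refl 0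
    · exact (mfun_bounded hwf x y).1
  have hediag : ∀ x, e x x = 0 := fun x => by rw [he]; simp
  have helem : ∀ x y, e x y ≤ mfun T x y := by
    intro x y
    rw [he]; dsimp only
    split
    · exact (mfun_bounded hwf x y).1
    · exact le_refl _
  have heb : Bounded1 e := fun x y =>
    ⟨he0 x y, le_trans (helem x y) (mfun_bounded hwf x y).2⟩
  have hepre : Pre T e := by
    refine ⟨heb, fun x y => ?_⟩
    by_cases h : x = y
    · subst h
      rw [hediag x]
      exact Ffun_refl he0 hediag hwf x
    · have : e x y = mfun T x y := by rw [he]; simp [h]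
      rw [this]
      exact le_trans (Ffun_mono heb (mfun_bounded hwf) hwf helem x y)
        ((mfun_pre hwf).2 x y)
  have h1 : mfun T s s ≤ e s s := mfun_le hepre s s
  rw [hediag s] at h1
  exact le_antisymm h1 (mfun_bounded hwf s s).1

lemma mfun_symm (hwf : WellFormed T) (s t : S) : mfun T s t = mfun T t s := by
  set e : S → S → ℝ := fun x y => min (mfun T x y) (mfun T y x) with he
  have helem : ∀ x y, e x y ≤ mfun T x y := fun x y => min_le_left _ _
  have heb : Bounded1 e := fun x y =>
    ⟨le_min (mfun_bounded hwf x y).1 (mfun_bounded hwf y x).1,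
     le_trans (helem x y) (mfun_bounded hwf x y).2⟩
  have hesym : ∀ x y, e x y = e y x := fun x y => min_comm _ _
  have hepre : Pre T e := by
    refine ⟨heb, fun x y => ?_⟩
    refine le_min ?_ ?_
    · exact le_trans (Ffun_mono heb (mfun_bounded hwf) hwf helem x y)
        ((mfun_pre hwf).2 x y)
    · rw [Ffun_symm hesym x y]
      exact le_trans (Ffun_mono heb (mfun_bounded hwf) hwf helem y x)
        ((mfun_pre hwf).2 y x)
  have h1 := mfun_le hepre s t
  have h2 := mfun_le hepre t s
  have := min_le_right (mfun T s t) (mfun T t s)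
  have := min_le_right (mfun T t s) (mfun T s t)
  refine le_antisymm ?_ ?_
  · exact le_trans h1 (min_le_right _ _)
  · exact le_trans h2 (min_le_right _ _)

lemma mfun_tri (hwf : WellFormed T) (hfin : ImageFinite T) (x y z : S) :
    mfun T x z ≤ mfun T x y + mfun T y z := by
  set Fam : (S → S → ℝ) → Prop := fun f =>
    (∀ a b, 0 ≤ f a b) ∧ (∀ a b, f a b ≤ mfun T a b) ∧
      ∀ a b c, f a c ≤ f a b + f b c with hFam
  set e : S → S → ℝ := fun s t => sSup {r | ∃ f, Fam f ∧ r = f s t} with he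
  have zeroFam : Fam (fun _ _ => 0) :=
    ⟨fun _ _ => le_refl 0, fun a b => (mfun_bounded hwf a b).1, fun _ _ _ => by norm_num⟩
  have hne : ∀ s t : S, {r | ∃ f, Fam f ∧ r = f s t}.Nonempty :=
    fun s t => ⟨0, fun _ _ => 0, zeroFam, rfl⟩
  have hbdd : ∀ s t : S, BddAbove {r | ∃ f, Fam f ∧ r = f s t} := by
    intro s t
    refine ⟨mfun T s t, ?_⟩
    rintro r ⟨f, hf, rfl⟩
    exact hf.2.1 s t
  have f_le_e : ∀ f, Fam f → ∀ s t, f s t ≤ e s t := fun f hf s t =>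
    le_csSup (hbdd s t) ⟨f, hf, rfl⟩
  have e_le_m : ∀ s t, e s t ≤ mfun T s t := by
    intro s t
    refine csSup_le (hne s t) ?_
    rintro r ⟨f, hf, rfl⟩
    exact hf.2.1 s t
  have e_nonneg : ∀ s t, 0 ≤ e s t := fun s t => f_le_e _ zeroFam s t
  have e_b : Bounded1 e := fun s t =>
    ⟨e_nonneg s t, le_trans (e_le_m s t) (mfun_bounded hwf s t).2⟩
  have e_tri : ∀ a b c, e a c ≤ e a b + e b c := by
    intro a b c
    refine csSup_le (hne a c) ?_
    rintro r ⟨f, hf, rfl⟩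
    exact le_trans (hf.2.2 a b c) (add_le_add (f_le_e f hf a b) (f_le_e f hf b c))
  have FeFam : Fam (Ffun T e) := by
    refine ⟨fun a b => Ffun_nonneg e_b a b, fun a b => ?_, fun a b c => ?_⟩
    · exact le_trans (Ffun_mono e_b (mfun_bounded hwf) hwf e_le_m a b)
        ((mfun_pre hwf).2 a b)
    · exact Ffun_triangle e_b e_tri hwf hfin a b c
  have e_pre : Pre T e := ⟨e_b, fun s t => f_le_e _ FeFam s t⟩
  calc mfun T x z ≤ e x z := mfun_le e_pre x z
    _ ≤ e x y + e y z := e_tri x y z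
    _ ≤ mfun T x y + mfun T y z := add_le_add (e_le_m x y) (e_le_m y z)

lemma mfun_sbm (hwf : WellFormed T) (hfin : ImageFinite T) : IsSBM T (mfun T) :=
  (part1 hwf hfin _ ⟨mfun_refl hwf, mfun_symm hwf, mfun_tri hwf hfin⟩
    (mfun_bounded hwf)).mpr (mfun_pre hwf).2

end Mfun

end SBMAux

end Helpers

/-- A 1-bounded pseudometric is a state-based bisimulation metric iff it is a
prefixed point of `F`; consequently the least state-based bisimulation metric
is the least fixed point of the monotone functor `F`. -/
theorem sbm_iff_prefixed_and_lfp {S A : Type} [Fintype S] (T : PLTS S A)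
    (hwf : WellFormed T) (hfin : ImageFinite T) :
    (∀ d : S → S → ℝ, IsPseudometric d → Bounded1 d →
      (IsSBM T d ↔ ∀ s t, Ffun T d s t ≤ d s t)) ∧
    (∀ db : S → S → ℝ,
      (IsSBM T db ∧ ∀ d, IsSBM T d → ∀ s t, db s t ≤ d s t) →
      ((∀ s t, Ffun T db s t = db s t) ∧
       ∀ d : S → S → ℝ, Bounded1 d → (∀ s t, Ffun T d s t ≤ d s t) →
         ∀ s t, db s t ≤ d s t)) := by
  constructor
  · exact fun d hpm hb => SBMAux.part1 hwf hfin d hpm hb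
  · rintro db ⟨hdb, hleast⟩
    have hdbpre : ∀ s t, Ffun T db s t ≤ db s t :=
      (SBMAux.part1 hwf hfin db hdb.1 hdb.2.1).mp hdb
    have h1 : ∀ s t, SBMAux.mfun T s t ≤ db s t :=
      SBMAux.mfun_le ⟨hdb.2.1, hdbpre⟩
    have h2 : ∀ s t, db s t ≤ SBMAux.mfun T s t :=
      hleast _ (SBMAux.mfun_sbm hwf hfin)
    have heq : db = SBMAux.mfun T :=
      funext fun s => funext fun t => le_antisymm (h2 s t) (h1 s t)
    constructor
    · intro s t
      rw [heq]
      exact SBMAux.mfun_fix hwf s t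
    · intro d hd hpre s t
      rw [heq]
      exact SBMAux.mfun_le ⟨hd, hpre⟩ s t
end

section
/- Soundness of the distribution-level logic L^{D*}: for every formula ψ of the grammar ψ ::= ⊤ | ¬ψ | ψ⊖p | ψ₁∧ψ₂ | ⟨a⟩ψ, and all subdistributions Δ₁, Δ₂, |⟦ψ⟧(Δ₁) − ⟦ψ⟧(Δ₂)| ≤ d_d(Δ₁,Δ₂), where d_d is the distribution-based bisimilarity metric. -/
open scoped BigOperators

/-- The unit interval `[0,1]` as a type of probabilities. -/
abbrev UI : Type := { p : ℝ // 0 ≤ p ∧ p ≤ 1 }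

/-- A subdistribution over a finite set `S`. -/
def IsSubDist {S : Type} [Fintype S] (Δ : S → ℝ) : Prop :=
  (∀ s, 0 ≤ Δ s) ∧ ∑ s, Δ s ≤ 1

/-- The mass `|Δ|` of a subdistribution. -/
noncomputable def mass {S : Type} [Fintype S] (Δ : S → ℝ) : ℝ := ∑ s, Δ s

/-- The lifted transition relation on subdistributions:
`Δ →ᵃ Δ'` if `Δ' = Σ_{s ∈ supp Δ} Δ(s)·Δ_s`, where each `Δ_s` is an
`a`-successor of `s`, or the empty subdistribution if `s` has no
`a`-transition. -/
def liftTrans {S A : Type} [Fintype S] (T : PLTS S A) (a : A) (Δ Δ' : S → ℝ) : Prop :=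
  ∃ f : S → S → ℝ,
    (∀ s, Δ s ≠ 0 →
      (T.trans s a (f s) ∨ ((∀ Θ, ¬ T.trans s a Θ) ∧ f s = fun _ => 0))) ∧
    Δ' = fun t => ∑ s, Δ s * f s t

/-- Formulae of the distribution-level logic `L^{D*}`. -/
inductive DFm (A : Type) : Type where
  | top : DFm A
  | neg : DFm A → DFm A
  | sub : DFm A → UI → DFm A
  | and : DFm A → DFm A → DFm A
  | dia : A → DFm A → DFm A

/-- Semantics of `L^{D*}` formulae on subdistributions. -/
noncomputable def semL {S A : Type} [Fintype S] (T : PLTS S A) : DFm A → (S → ℝ) → ℝ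
  | DFm.top, Δ => ∑ s, Δ s
  | DFm.neg ψ, Δ => 1 - semL T ψ Δ
  | DFm.sub ψ p, Δ => max (semL T ψ Δ - p.1) 0
  | DFm.and ψ₁ ψ₂, Δ => min (semL T ψ₁ Δ) (semL T ψ₂ Δ)
  | DFm.dia a ψ, Δ => sup0 {r | ∃ Δ', liftTrans T a Δ Δ' ∧ r = semL T ψ Δ'}

/-- `d` is a distribution-based bisimulation metric: a 1-bounded pseudometric
on subdistributions dominating the mass difference and satisfying the
ε-transfer condition for lifted transitions. -/
def IsDBM {S A : Type} [Fintype S] (T : PLTS S A)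
    (d : (S → ℝ) → (S → ℝ) → ℝ) : Prop :=
  (∀ Δ, IsSubDist Δ → d Δ Δ = 0) ∧
  (∀ Δ Θ, IsSubDist Δ → IsSubDist Θ → d Δ Θ = d Θ Δ) ∧
  (∀ Δ Θ Ξ, IsSubDist Δ → IsSubDist Θ → IsSubDist Ξ → d Δ Ξ ≤ d Δ Θ + d Θ Ξ) ∧
  (∀ Δ Θ, IsSubDist Δ → IsSubDist Θ → 0 ≤ d Δ Θ ∧ d Δ Θ ≤ 1) ∧
  (∀ Δ Θ, IsSubDist Δ → IsSubDist Θ → |mass Δ - mass Θ| ≤ d Δ Θ) ∧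
  (∀ Δ₁ Δ₂, IsSubDist Δ₁ → IsSubDist Δ₂ →
    ∀ ε : ℝ, 0 ≤ ε → ε < 1 → d Δ₁ Δ₂ ≤ ε →
      ∀ a Δ₁', liftTrans T a Δ₁ Δ₁' →
        ∃ Δ₂', liftTrans T a Δ₂ Δ₂' ∧ d Δ₁' Δ₂' ≤ ε)

/-- The logical metric on subdistributions induced by `L^{D*}`. -/
noncomputable def dDistLogic {S A : Type} [Fintype S] (T : PLTS S A) :
    (S → ℝ) → (S → ℝ) → ℝ :=
  fun Δ Θ => sSup {r | ∃ ψ : DFm A, r = |semL T ψ Δ - semL T ψ Θ|}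

lemma liftTrans_subdist {S A : Type} [Fintype S] {T : PLTS S A} (hwf : WellFormed T)
    {a : A} {Δ Δ' : S → ℝ} (hΔ : IsSubDist Δ) (h : liftTrans T a Δ Δ') : IsSubDist Δ' := by
  obtain ⟨f, hf, rfl⟩ := h
  constructor
  · intro t
    apply Finset.sum_nonneg
    intro s _
    by_cases hs : Δ s = 0
    · simp [hs]
    · rcases hf s hs with h1 | h1
      · exact mul_nonneg (hΔ.1 s) ((hwf s a _ h1).1 t)
      · simp [h1.2]
  · calc ∑ t, ∑ s, Δ s * f s t = ∑ s, Δ s * ∑ t, f s t := by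
          rw [Finset.sum_comm]; simp [Finset.mul_sum]
    _ ≤ ∑ s, Δ s := by
          apply Finset.sum_le_sum
          intro s _
          by_cases hs : Δ s = 0
          · simp [hs]
          · rcases hf s hs with h1 | h1
            · rw [(hwf s a _ h1).2, mul_one]
            · simpa [h1.2] using hΔ.1 s
    _ ≤ 1 := hΔ.2

lemma liftTrans_exists {S A : Type} [Fintype S] (T : PLTS S A) (a : A) (Δ : S → ℝ) :
    ∃ Δ', liftTrans T a Δ Δ' := by
  classical
  refine ⟨_, fun s => if h : ∃ Θ, T.trans s a Θ then h.choose else fun _ => 0, ?_, rfl⟩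
  intro s _
  by_cases h : ∃ Θ, T.trans s a Θ
  · left; simpa [h] using h.choose_spec
  · right; exact ⟨fun Θ hΘ => h ⟨Θ, hΘ⟩, by simp [h]⟩

lemma semL_bounds {S A : Type} [Fintype S] {T : PLTS S A} (hwf : WellFormed T) :
    ∀ (ψ : DFm A) (Δ : S → ℝ), IsSubDist Δ → 0 ≤ semL T ψ Δ ∧ semL T ψ Δ ≤ 1 := by
  intro ψ
  induction ψ with
  | top =>
    intro Δ h
    exact ⟨Finset.sum_nonneg fun s _ => h.1 s, h.2⟩
  | neg ψ ih =>
    intro Δ h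
    obtain ⟨h1, h2⟩ := ih Δ h
    simp only [semL]
    constructor <;> linarith
  | sub ψ p ih =>
    intro Δ h
    obtain ⟨h1, h2⟩ := ih Δ h
    simp only [semL]
    refine ⟨le_max_right _ _, max_le (by linarith [p.2.1]) zero_le_one⟩
  | and ψ₁ ψ₂ ih₁ ih₂ =>
    intro Δ h
    obtain ⟨h1, h2⟩ := ih₁ Δ h
    obtain ⟨h3, h4⟩ := ih₂ Δ h
    exact ⟨le_min h1 h3, le_trans (min_le_left _ _) h2⟩
  | dia a ψ ih =>
    intro Δ h
    simp only [semL]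
    have hmem : ∀ r ∈ {r | ∃ Δ', liftTrans T a Δ Δ' ∧ r = semL T ψ Δ'},
        0 ≤ r ∧ r ≤ 1 := by
      rintro r ⟨Δ', hΔ', rfl⟩
      exact ih Δ' (liftTrans_subdist hwf h hΔ')
    obtain ⟨Δ', hΔ'⟩ := liftTrans_exists T a Δ
    have hne : (Set.Nonempty {r | ∃ Δ', liftTrans T a Δ Δ' ∧ r = semL T ψ Δ'}) :=
      ⟨semL T ψ Δ', Δ', hΔ', rfl⟩
    rw [sup0, if_pos hne]
    constructor
    · refine le_trans (hmem _ ⟨Δ', hΔ', rfl⟩).1 (le_csSup ⟨1, ?_⟩ ⟨Δ', hΔ', rfl⟩)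
      intro r hr; exact (hmem r hr).2
    · exact Real.sSup_le (fun r hr => (hmem r hr).2) zero_le_one

lemma dia_one_side {S A : Type} [Fintype S] {T : PLTS S A} (hwf : WellFormed T)
    (dd : (S → ℝ) → (S → ℝ) → ℝ) (hDBM : IsDBM T dd) (ψ : DFm A)
    (ih : ∀ Δ₁ Δ₂ : S → ℝ, IsSubDist Δ₁ → IsSubDist Δ₂ →
      |semL T ψ Δ₁ - semL T ψ Δ₂| ≤ dd Δ₁ Δ₂)
    (Δ₁ Δ₂ : S → ℝ) (h1 : IsSubDist Δ₁) (h2 : IsSubDist Δ₂) (a : A)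
    (hε1 : dd Δ₁ Δ₂ < 1) :
    semL T (DFm.dia a ψ) Δ₁ - semL T (DFm.dia a ψ) Δ₂ ≤ dd Δ₁ Δ₂ := by
  set ε := dd Δ₁ Δ₂ with hεdef
  have hε0 : 0 ≤ ε := (hDBM.2.2.2.1 Δ₁ Δ₂ h1 h2).1
  simp only [semL]
  set P₁ := {r | ∃ Δ', liftTrans T a Δ₁ Δ' ∧ r = semL T ψ Δ'}
  set P₂ := {r | ∃ Δ', liftTrans T a Δ₂ Δ' ∧ r = semL T ψ Δ'}
  obtain ⟨Θ₁, hΘ₁⟩ := liftTrans_exists T a Δ₁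
  obtain ⟨Θ₂, hΘ₂⟩ := liftTrans_exists T a Δ₂
  have hne₁ : P₁.Nonempty := ⟨semL T ψ Θ₁, Θ₁, hΘ₁, rfl⟩
  have hne₂ : P₂.Nonempty := ⟨semL T ψ Θ₂, Θ₂, hΘ₂, rfl⟩
  have hbd₂ : ∀ r ∈ P₂, r ≤ 1 := by
    rintro r ⟨Δ', hΔ', rfl⟩
    exact (semL_bounds hwf ψ Δ' (liftTrans_subdist hwf h2 hΔ')).2
  have hbdd₂ : BddAbove P₂ := ⟨1, hbd₂⟩
  have hnn₂ : 0 ≤ sSup P₂ := by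
    refine le_trans ?_ (le_csSup hbdd₂ ⟨Θ₂, hΘ₂, rfl⟩)
    exact (semL_bounds hwf ψ Θ₂ (liftTrans_subdist hwf h2 hΘ₂)).1
  rw [sup0, if_pos hne₁, sup0, if_pos hne₂]
  rw [sub_le_iff_le_add]
  refine Real.sSup_le ?_ (by linarith)
  rintro r ⟨Δ₁', hΔ₁', rfl⟩
  obtain ⟨Δ₂', hΔ₂', hd'⟩ := hDBM.2.2.2.2.2 Δ₁ Δ₂ h1 h2 ε hε0 hε1 le_rfl a Δ₁' hΔ₁'
  have hih := ih Δ₁' Δ₂' (liftTrans_subdist hwf h1 hΔ₁') (liftTrans_subdist hwf h2 hΔ₂')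
  have h2' : semL T ψ Δ₂' ≤ sSup P₂ := le_csSup hbdd₂ ⟨Δ₂', hΔ₂', rfl⟩
  have := abs_sub_le_iff.mp hih
  linarith [this.1]

/-- Soundness of the distribution-level logic `L^{D*}` with respect to the
distribution-based bisimilarity metric. -/
theorem dist_logic_soundness {S A : Type} [Fintype S] (T : PLTS S A)
    (hwf : WellFormed T)
    (dd : (S → ℝ) → (S → ℝ) → ℝ)
    (hdd : IsDBM T dd ∧
      ∀ d, IsDBM T d → ∀ Δ Θ, IsSubDist Δ → IsSubDist Θ → dd Δ Θ ≤ d Δ Θ) :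
    ∀ (ψ : DFm A) (Δ₁ Δ₂ : S → ℝ), IsSubDist Δ₁ → IsSubDist Δ₂ →
      |semL T ψ Δ₁ - semL T ψ Δ₂| ≤ dd Δ₁ Δ₂ := by
  obtain ⟨hDBM, -⟩ := hdd
  intro ψ
  induction ψ with
  | top =>
    intro Δ₁ Δ₂ h1 h2
    exact hDBM.2.2.2.2.1 Δ₁ Δ₂ h1 h2
  | neg ψ ih =>
    intro Δ₁ Δ₂ h1 h2
    have := ih Δ₁ Δ₂ h1 h2
    simp only [semL]
    rw [show (1 - semL T ψ Δ₁) - (1 - semL T ψ Δ₂) = -(semL T ψ Δ₁ - semL T ψ Δ₂) by ring,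
      abs_neg]
    exact this
  | sub ψ p ih =>
    intro Δ₁ Δ₂ h1 h2
    have := ih Δ₁ Δ₂ h1 h2
    simp only [semL]
    refine le_trans (abs_max_sub_max_le_abs _ _ _) ?_
    simpa using this
  | and ψ₁ ψ₂ ih₁ ih₂ =>
    intro Δ₁ Δ₂ h1 h2
    simp only [semL]
    refine le_trans (abs_min_sub_min_le_max _ _ _ _) ?_
    exact max_le (ih₁ Δ₁ Δ₂ h1 h2) (ih₂ Δ₁ Δ₂ h1 h2)
  | dia a ψ ih =>
    intro Δ₁ Δ₂ h1 h2
    have hε0 : 0 ≤ dd Δ₁ Δ₂ := (hDBM.2.2.2.1 Δ₁ Δ₂ h1 h2).1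
    have hεb : dd Δ₁ Δ₂ ≤ 1 := (hDBM.2.2.2.1 Δ₁ Δ₂ h1 h2).2
    rcases lt_or_eq_of_le hεb with hlt | heq
    · rw [abs_sub_le_iff]
      constructor
      · exact dia_one_side hwf dd hDBM ψ ih Δ₁ Δ₂ h1 h2 a hlt
      · have hsymm : dd Δ₂ Δ₁ = dd Δ₁ Δ₂ := hDBM.2.1 Δ₂ Δ₁ h2 h1
        have := dia_one_side hwf dd hDBM ψ ih Δ₂ Δ₁ h2 h1 a (by rw [hsymm]; exact hlt)
        rwa [hsymm] at this
    · rw [heq]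
      have b1 := semL_bounds hwf (DFm.dia a ψ) Δ₁ h1
      have b2 := semL_bounds hwf (DFm.dia a ψ) Δ₂ h2
      rw [abs_sub_le_iff]
      constructor <;> linarith [b1.1, b1.2, b2.1, b2.2]
end

section
/- A 1-bounded pseudometric d on states is a convex bisimulation metric (i.e., for d(s,t) ≤ ε < 1 and s →^a Δ there is Δ' in the convex closure of der(t,a) with K(d)(Δ,Δ') ≤ ε) if and only if for all s,t with d(s,t) ≤ ε < 1, every combined transition s →^a_c Δ can be matched by a combined transition t →^a_c Δ' with K(d)(Δ,Δ') ≤ ε. -/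
open scoped BigOperators

/-- The convex closure (set of finite convex combinations) of a set of
distributions. -/
def cc {S : Type} [Fintype S] (P : Set (S → ℝ)) : Set (S → ℝ) :=
  {Δ | ∃ (n : ℕ) (p : Fin n → ℝ) (D : Fin n → S → ℝ),
    (∀ i, 0 ≤ p i) ∧ (∑ i, p i = 1) ∧ (∀ i, D i ∈ P) ∧
    Δ = fun s => ∑ i, p i * D i s}

/-!
Matching an ordinary transition is a special case of matching a combined one, since
`der t a ⊆ cc (der t a)`. Conversely, write a combined transition of `s` as `∑ pᵢ Δᵢ` with
`s →ᵃ Δᵢ`, match each `Δᵢ` by some `Δ'ᵢ ∈ cc (der t a)`, and take `∑ pᵢ Δ'ᵢ`, which lies in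
`cc (der t a)` because the convex closure is convex. Mixing near-optimal matchings of the pairs
`(Δᵢ, Δ'ᵢ)` with the same weights gives a matching of the mixtures, so the Kantorovich lifting is
convex: `K(d)(∑ pᵢ Δᵢ, ∑ pᵢ Δ'ᵢ) ≤ ∑ pᵢ K(d)(Δᵢ, Δ'ᵢ) ≤ ε`.
-/

open Finset

section ConvexCombination

variable {X : Type} [Fintype X] {n : ℕ} {p : Fin n → ℝ}

lemma IsDist.sum_mul (hp : ∀ i, 0 ≤ p i) (hp1 : ∑ i, p i = 1) {D : Fin n → X → ℝ}
    (hD : ∀ i, IsDist (D i)) : IsDist (fun x => ∑ i, p i * D i x) := by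
  refine ⟨fun x => sum_nonneg fun i _ => mul_nonneg (hp i) ((hD i).1 x), ?_⟩
  rw [sum_comm]
  simp only [← mul_sum, fun i => (hD i).2, mul_one, hp1]

lemma IsMatching.sum_mul (hp : ∀ i, 0 ≤ p i) (hp1 : ∑ i, p i = 1) {ω : Fin n → X × X → ℝ}
    {Δ Θ : Fin n → X → ℝ} (hω : ∀ i, IsMatching (ω i) (Δ i) (Θ i)) :
    IsMatching (fun q => ∑ i, p i * ω i q)
      (fun x => ∑ i, p i * Δ i x) (fun y => ∑ i, p i * Θ i y) := by
  refine ⟨IsDist.sum_mul hp hp1 fun i => (hω i).1, fun x => ?_, fun y => ?_⟩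
  · rw [sum_comm]
    simp only [← mul_sum, fun i => (hω i).2.1 x]
  · rw [sum_comm]
    simp only [← mul_sum, fun i => (hω i).2.2 y]

end ConvexCombination

section ConvexClosure

variable {S : Type} [Fintype S] {P : Set (S → ℝ)}

lemma mem_cc_of_mem {Δ : S → ℝ} (h : Δ ∈ P) : Δ ∈ cc P :=
  ⟨1, fun _ => 1, fun _ => Δ, fun _ => zero_le_one, by simp, fun _ => h, by simp⟩

lemma convex_cc : Convex ℝ (cc P) := by
  rintro _ ⟨n, p, D, hp, hp1, hD, rfl⟩ _ ⟨m, q, E, hq, hq1, hE, rfl⟩ a b ha hb hab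
  refine ⟨n + m, Fin.addCases (fun i => a * p i) (fun j => b * q j),
    Fin.addCases D E, fun i => ?_, ?_, fun i => ?_, ?_⟩
  · induction i using Fin.addCases with
    | left i => simpa using mul_nonneg ha (hp i)
    | right j => simpa using mul_nonneg hb (hq j)
  · simp only [Fin.sum_univ_add, Fin.addCases_left, Fin.addCases_right, ← mul_sum, hp1, hq1,
      mul_one, hab]
  · induction i using Fin.addCases with
    | left i => simpa using hD i
    | right j => simpa using hE j
  · funext s
    simp only [Pi.add_apply, Pi.smul_apply, smul_eq_mul, Fin.sum_univ_add, Fin.addCases_left,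
      Fin.addCases_right, mul_sum, mul_assoc]

lemma sum_mul_mem_cc {n : ℕ} {p : Fin n → ℝ} {D : Fin n → S → ℝ}
    (hp : ∀ i, 0 ≤ p i) (hp1 : ∑ i, p i = 1) (hD : ∀ i, D i ∈ cc P) :
    (fun s => ∑ i, p i * D i s) ∈ cc P := by
  convert convex_cc.sum_mem (fun i _ => hp i) hp1 fun i _ => hD i using 1
  funext s
  simp [Finset.sum_apply]

lemma IsDist.of_mem_cc (hP : ∀ Θ ∈ P, IsDist Θ) {Δ : S → ℝ} (h : Δ ∈ cc P) : IsDist Δ := by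
  obtain ⟨n, p, D, hp, hp1, hD, rfl⟩ := h
  exact IsDist.sum_mul hp hp1 fun i => hP _ (hD i)

end ConvexClosure

section Kantorovich

variable {S : Type} [Fintype S] {d : S → S → ℝ} {Δ Θ : S → ℝ}

lemma isMatching_prod (hΔ : IsDist Δ) (hΘ : IsDist Θ) :
    IsMatching (fun q : S × S => Δ q.1 * Θ q.2) Δ Θ := by
  refine ⟨⟨fun q => mul_nonneg (hΔ.1 _) (hΘ.1 _), ?_⟩, fun s => ?_, fun t => ?_⟩
  · simp [Fintype.sum_prod_type, ← mul_sum, hΘ.2, hΔ.2]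
  · simp [← mul_sum, hΘ.2]
  · simp [← sum_mul, hΔ.2]

lemma Kan_le_of_isMatching (hd0 : ∀ x y, 0 ≤ d x y) {ω : S × S → ℝ}
    (hω : IsMatching ω Δ Θ) : Kan d Δ Θ ≤ ∑ q : S × S, d q.1 q.2 * ω q := by
  refine csInf_le ⟨0, ?_⟩ ⟨ω, hω, rfl⟩
  rintro _ ⟨ω', hω', rfl⟩
  exact sum_nonneg fun q _ => mul_nonneg (hd0 _ _) (hω'.1.1 q)

lemma exists_isMatching_cost_lt (hΔ : IsDist Δ) (hΘ : IsDist Θ) {δ : ℝ} (hδ : 0 < δ) :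
    ∃ ω, IsMatching ω Δ Θ ∧ ∑ q : S × S, d q.1 q.2 * ω q < Kan d Δ Θ + δ := by
  have hne :
      {r | ∃ ω : S × S → ℝ, IsMatching ω Δ Θ ∧ r = ∑ q : S × S, d q.1 q.2 * ω q}.Nonempty :=
    ⟨_, _, isMatching_prod hΔ hΘ, rfl⟩
  obtain ⟨_, ⟨ω, hω, rfl⟩, hlt⟩ := Real.lt_sInf_add_pos hne hδ
  exact ⟨ω, hω, hlt⟩

lemma Kan_sum_mul_le_sum_mul (hd0 : ∀ x y, 0 ≤ d x y) {n : ℕ} {p : Fin n → ℝ}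
    (hp : ∀ i, 0 ≤ p i) (hp1 : ∑ i, p i = 1) {Δ Θ : Fin n → S → ℝ}
    (hΔ : ∀ i, IsDist (Δ i)) (hΘ : ∀ i, IsDist (Θ i)) :
    Kan d (fun s => ∑ i, p i * Δ i s) (fun s => ∑ i, p i * Θ i s) ≤
      ∑ i, p i * Kan d (Δ i) (Θ i) := by
  refine le_of_forall_pos_le_add fun δ hδ => ?_
  choose ω hω hcost using fun i => exists_isMatching_cost_lt (d := d) (hΔ i) (hΘ i) hδ
  calc Kan d (fun s => ∑ i, p i * Δ i s) (fun s => ∑ i, p i * Θ i s)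
      ≤ ∑ q : S × S, d q.1 q.2 * ∑ i, p i * ω i q :=
        Kan_le_of_isMatching hd0 (IsMatching.sum_mul hp hp1 hω)
    _ = ∑ i, p i * ∑ q : S × S, d q.1 q.2 * ω i q := by
        simp only [mul_sum]
        rw [sum_comm]
        simp only [mul_left_comm]
    _ ≤ ∑ i, p i * (Kan d (Δ i) (Θ i) + δ) :=
        sum_le_sum fun i _ => mul_le_mul_of_nonneg_left (hcost i).le (hp i)
    _ = ∑ i, p i * Kan d (Δ i) (Θ i) + δ := by
        simp only [mul_add, sum_add_distrib, ← sum_mul, hp1, one_mul]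

end Kantorovich

theorem convex_bisim_metric_iff_combined_general {S A : Type} [Fintype S] (T : PLTS S A)
    (hwf : WellFormed T)
    (d : S → S → ℝ) (hb : Bounded1 d) :
    (∀ s t (ε : ℝ), 0 ≤ ε → ε < 1 → d s t ≤ ε →
      ∀ a Δ, T.trans s a Δ → ∃ Δ' ∈ cc (der T t a), Kan d Δ Δ' ≤ ε) ↔
    (∀ s t (ε : ℝ), 0 ≤ ε → ε < 1 → d s t ≤ ε →
      ∀ a Δ, Δ ∈ cc (der T s a) → ∃ Δ' ∈ cc (der T t a), Kan d Δ Δ' ≤ ε) := by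
  refine ⟨fun h s t ε hε0 hε1 hdst a Δ hΔ => ?_,
    fun h s t ε hε0 hε1 hdst a Δ hΔ => h s t ε hε0 hε1 hdst a Δ (mem_cc_of_mem hΔ)⟩
  obtain ⟨n, p, D, hp, hp1, hD, rfl⟩ := hΔ
  choose Δ' hΔ'cc hΔ'K using fun i => h s t ε hε0 hε1 hdst a (D i) (hD i)
  refine ⟨fun s => ∑ i, p i * Δ' i s, sum_mul_mem_cc hp hp1 hΔ'cc, ?_⟩
  calc _ ≤ ∑ i, p i * Kan d (D i) (Δ' i) :=
        Kan_sum_mul_le_sum_mul (fun x y => (hb x y).1) hp hp1 (fun i => hwf s a (D i) (hD i))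
          fun i => IsDist.of_mem_cc (hwf t a) (hΔ'cc i)
    _ ≤ ∑ i, p i * ε := sum_le_sum fun i _ => mul_le_mul_of_nonneg_left (hΔ'K i) (hp i)
    _ = ε := by rw [← sum_mul, hp1, one_mul]

/-- `d` is a convex bisimulation metric iff ordinary transitions matched by
combined transitions can be replaced by combined transitions matched by
combined transitions. -/
theorem convex_bisim_metric_iff_combined {S A : Type} [Fintype S] (T : PLTS S A)
    (hwf : WellFormed T)
    (d : S → S → ℝ) (hd : IsPseudometric d) (hb : Bounded1 d) :
    (∀ s t (ε : ℝ), 0 ≤ ε → ε < 1 → d s t ≤ ε →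
      ∀ a Δ, T.trans s a Δ → ∃ Δ' ∈ cc (der T t a), Kan d Δ Δ' ≤ ε) ↔
    (∀ s t (ε : ℝ), 0 ≤ ε → ε < 1 → d s t ≤ ε →
      ∀ a Δ, Δ ∈ cc (der T s a) → ∃ Δ' ∈ cc (der T t a), Kan d Δ Δ' ≤ ε) :=
  convex_bisim_metric_iff_combined_general T hwf d hb
end
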